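/- Two distinct pseudo-MEMs of a pattern P can overlap in at most k - 2 characters, and no pseudo-MEM is contained in (nests inside) another. -/

import Mathlib

/-!
A pseudo-MEM is maximal among the intervals of `P` all of whose `k`-mers pass `F`, so it cannot
lie strictly inside another such interval; this rules out nesting. If two pseudo-MEMs
`P[i1..j1]`, `P[i2..j2]` with `i1 < i2` overlapped in `k - 1` or more characters, every `k`-mer
of `P[i1..j2]` would lie inside one of them, so `P[i1..j2]` would be such an interval strictly
containing `P[i1..j1]`.
-/

open List

variable {α : Type*}

/-- `substr P i j` is the substring `P[i..j]` (inclusive indices). -/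
def substr (P : List α) (i j : ℕ) : List α := (P.drop i).take (j - i + 1)

/-- `IsMEM T P i j` : `P[i..j]` is a maximal exact match of `P` w.r.t. `T`:
it occurs in `T`, and it can be extended neither to the left nor to the right
within `P` while still occurring in `T`. -/
def IsMEM (T P : List α) (i j : ℕ) : Prop :=
  i ≤ j ∧ j < P.length ∧ substr P i j <:+: T ∧
  (i = 0 ∨ ¬ substr P (i - 1) j <:+: T) ∧
  (j = P.length - 1 ∨ ¬ substr P i (j + 1) <:+: T)

/-- All length-`k` substrings (`k`-mers) of `S` pass the filter `F`. -/
def kmersPass (F : List α → Bool) (k : ℕ) (S : List α) : Prop :=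
  ∀ w : List α, w.length = k → w <:+: S → F w = true

/-- `IsPseudoMEM F k L P i j` : `P[i..j]` is a maximal substring of `P` of length
at least `L` all of whose `k`-mers pass the filter `F`. -/
def IsPseudoMEM (F : List α → Bool) (k L : ℕ) (P : List α) (i j : ℕ) : Prop :=
  i ≤ j ∧ j < P.length ∧ L ≤ j - i + 1 ∧ kmersPass F k (substr P i j) ∧
  (i = 0 ∨ ¬ kmersPass F k (substr P (i - 1) j)) ∧
  (j = P.length - 1 ∨ ¬ kmersPass F k (substr P i (j + 1)))

/-- `F` has no false negatives for the `k`-mers of `T`. -/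
def NoFalseNeg (F : List α → Bool) (k : ℕ) (T : List α) : Prop :=
  ∀ w : List α, w.length = k → w <:+: T → F w = true

namespace List

theorem exists_eq_take_drop_of_infix_take_drop {w l : List α} {i m : ℕ}
    (h : w <:+: (l.drop i).take m) :
    ∃ s, i ≤ s ∧ s + w.length ≤ i + m ∧ w = (l.drop s).take w.length := by
  obtain ⟨u, t, hut⟩ := h
  have hlen := congrArg length hut
  have hw : w = (((l.drop i).take m).drop u.length).take w.length := by simp [← hut]
  simp only [length_append, length_take, length_drop] at hlen
  refine ⟨i + u.length, by omega, by omega, hw.trans ?_⟩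
  rw [drop_take, drop_drop, take_take, Nat.min_eq_left (by omega)]

theorem take_drop_infix_take_drop (l : List α) {s n i m : ℕ} (hs : i ≤ s) (hn : s + n ≤ i + m) :
    (l.drop s).take n <:+: (l.drop i).take m := by
  have h : (l.drop s).take n = (((l.drop i).take m).drop (s - i)).take n := by
    rw [drop_take, drop_drop, take_take, Nat.add_sub_cancel' hs, Nat.min_eq_left (by omega)]
  rw [h]
  exact (take_prefix _ _).isInfix.trans (drop_suffix _ _).isInfix

end List

theorem substr_infix_substr (P : List α) {i j i' j' : ℕ} (hi : i' ≤ i) (hij : i ≤ j)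
    (hj : j ≤ j') : substr P i j <:+: substr P i' j' :=
  List.take_drop_infix_take_drop P hi (by omega)

theorem kmersPass.mono {F : List α → Bool} {k : ℕ} {S T : List α} (h : kmersPass F k S)
    (hTS : T <:+: S) : kmersPass F k T :=
  fun w hw hwT => h w hw (hwT.trans hTS)

/-- Each `k`-mer of `P[i1..j2]` ends by `j1` or, the overlap being at least `k - 1`, starts at
or after `i2`. -/
theorem kmersPass_substr_union {F : List α → Bool} {k : ℕ} {P : List α} {i1 j1 i2 j2 : ℕ}
    (h1 : kmersPass F k (substr P i1 j1)) (h2 : kmersPass F k (substr P i2 j2))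
    (hi : i1 ≤ i2) (hoverlap : i2 + k ≤ j1 + 2) : kmersPass F k (substr P i1 j2) := by
  intro w hw hwS
  obtain ⟨s, hs, hsk, hws⟩ := List.exists_eq_take_drop_of_infix_take_drop hwS
  rw [hw] at hsk hws
  by_cases hend : s + k ≤ j1 + 1
  · exact h1 w hw (hws ▸ List.take_drop_infix_take_drop P hs (by omega))
  · exact h2 w hw (hws ▸ List.take_drop_infix_take_drop P (by omega) (by omega))

theorem IsPseudoMEM.eq_of_nested {F : List α → Bool} {k L : ℕ} {P : List α} {i j i' j' : ℕ}
    (h : IsPseudoMEM F k L P i j) (hpass : kmersPass F k (substr P i' j'))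
    (hj' : j' < P.length) (hi : i' ≤ i) (hj : j ≤ j') : i' = i ∧ j' = j := by
  obtain ⟨hij, -, -, -, hleft, hright⟩ := h
  constructor
  · by_contra hne
    rcases hleft with hi0 | hleft
    · omega
    · exact hleft (hpass.mono (substr_infix_substr P (by omega) (by omega) hj))
  · by_contra hne
    rcases hright with hjP | hright
    · omega
    · exact hright (hpass.mono (substr_infix_substr P hi (by omega) (by omega)))

theorem pseudoMEMs_no_nest_overlap_general (F : List α → Bool) (k L : ℕ) (P : List α)
    (i1 j1 i2 j2 : ℕ)
    (h1 : IsPseudoMEM F k L P i1 j1) (h2 : IsPseudoMEM F k L P i2 j2) :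
    ((i1, j1) ≠ (i2, j2) → ¬ (i1 ≤ i2 ∧ j2 ≤ j1)) ∧
    (i1 < i2 → j1 < j2 ∧ (j1 : ℤ) - (i2 : ℤ) + 1 ≤ (k : ℤ) - 2) := by
  have ⟨_, hj1, _, hpass1, _⟩ := h1
  have ⟨_, hj2, _, hpass2, _⟩ := h2
  have no_nest : (i1, j1) ≠ (i2, j2) → ¬ (i1 ≤ i2 ∧ j2 ≤ j1) := by
    rintro hne ⟨hi, hj⟩
    obtain ⟨rfl, rfl⟩ := h2.eq_of_nested hpass1 hj1 hi hj
    exact hne rfl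
  refine ⟨no_nest, fun hlt => ?_⟩
  have hj : j1 < j2 := by
    by_contra! hj
    exact no_nest (by simp only [ne_eq, Prod.mk.injEq]; omega) ⟨hlt.le, hj⟩
  refine ⟨hj, ?_⟩
  by_contra! hoverlap
  have hunion := kmersPass_substr_union hpass1 hpass2 hlt.le (by omega)
  have := (h1.eq_of_nested hunion hj2 le_rfl hj.le).2
  omega

/-- two distinct pseudo-MEMs of `P` cannot nest, and if they are
ordered `i1 < i2` they overlap in at most `k - 2` characters. -/
theorem pseudoMEMs_no_nest_overlap (F : List α → Bool) (k L : ℕ) (P : List α)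
    (hk : 1 ≤ k) (hkL : k < L)
    (i1 j1 i2 j2 : ℕ)
    (h1 : IsPseudoMEM F k L P i1 j1) (h2 : IsPseudoMEM F k L P i2 j2) :
    ((i1, j1) ≠ (i2, j2) → ¬ (i1 ≤ i2 ∧ j2 ≤ j1)) ∧
    (i1 < i2 → j1 < j2 ∧ (j1 : ℤ) - (i2 : ℤ) + 1 ≤ (k : ℤ) - 2) :=
  pseudoMEMs_no_nest_overlap_general F k L P i1 j1 i2 j2 h1 h2
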